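/- arXiv:2011.04923 — 2 statements merged into one kernel-verified Lean document; each statement's English description precedes it below -/
import Mathlib

section
/- Let M be a compact subset of ℝ^{n₀}, σ : ℝ → ℝ a continuous monotone activation function, and F ∈ NN_σ^{n₀}(n₀) a network function from ℝ^{n₀} to ℝ^{n₀} all of whose layers have width exactly n₀ and all of whose weight matrices W_j ∈ ℝ^{n₀×n₀}, j = 1,…,L, are invertible (square with full rank). If for some x ∈ M° (an interior point of M) the image F(x) is a boundary point of F(M), i.e. F(x) ∈ ∂(F(M)), then there exists x̃ ∈ ∂M such that F(x̃) = F(x). -/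
noncomputable section

/-- Network functions `ℝ^n → ℝ^n` with activation `σ`, all of whose layers have width
exactly `n` and all of whose (square) weight matrices are invertible:
`F = W_L ∘ A_{L-1} ∘ ⋯ ∘ A_1 + b_L` with `A_j x = σ (W_j x + b_j)`. -/
inductive IsInvNetChain (σ : ℝ → ℝ) (n : ℕ) : ((Fin n → ℝ) → (Fin n → ℝ)) → Prop
  | last (W : Matrix (Fin n) (Fin n) ℝ) (v : Fin n → ℝ) (hW : IsUnit W) :
      IsInvNetChain σ n (fun x => W.mulVec x + v)
  | hidden (W : Matrix (Fin n) (Fin n) ℝ) (v : Fin n → ℝ) {g : (Fin n → ℝ) → (Fin n → ℝ)}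
      (hW : IsUnit W) (hg : IsInvNetChain σ n g) :
      IsInvNetChain σ n (fun x => g (fun i => σ (W.mulVec x i + v i)))


/-!
Say that `f` attains frontier values on the frontier if, for compact `M`, every value `f x` with
`x ∈ interior M` lying on `frontier (f '' M)` is also attained on `frontier M`. Homeomorphisms
have this property, and it passes to `g ∘ f` for continuous `f`: if `f x` is interior to the
compact set `f '' M`, apply the property of `g` there and pull the frontier point back by `f`.
A network is a composition of invertible affine maps and componentwise activations, so it remains
to treat `v ↦ (σ (v i))ᵢ` for monotone continuous `σ` (antitone `σ` is `-(-σ)`). Its fibre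
through `x` is a box `C` of intervals. If `C` misses `frontier M`, then, being connected and
meeting `interior M`, it lies in `interior M`; so it is compact and some closed `δ`-thickening of
`C` lies in `M`. Since `σ` takes values strictly below and above `σ (x i)` just outside each
fibre, the image of that thickening is a neighbourhood of `σ ∘ x`.
-/

open Set Metric Topology Matrix

section FrontierValues

variable {X Y Z : Type*} [TopologicalSpace X] [TopologicalSpace Y] [TopologicalSpace Z]

def AttainsFrontierValuesOnFrontier (f : X → Y) : Prop :=
  ∀ M : Set X, IsCompact M → ∀ x ∈ interior M, f x ∈ frontier (f '' M) →
    ∃ x' ∈ frontier M, f x' = f x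

theorem IsHomeomorph.attainsFrontierValuesOnFrontier {f : X → Y} (hf : IsHomeomorph f) :
    AttainsFrontierValuesOnFrontier f := by
  intro M _ x _ hfx
  rw [← hf.image_frontier] at hfx
  exact hfx

theorem AttainsFrontierValuesOnFrontier.exists_mem_frontier_eq {f : X → Y}
    (hf : AttainsFrontierValuesOnFrontier f) {M : Set X} (hM : IsCompact M) {y : Y}
    (hy : y ∈ frontier (f '' M)) (hyM : y ∈ f '' M) : ∃ x' ∈ frontier M, f x' = y := by
  obtain ⟨x, hxM, rfl⟩ := hyM
  by_cases hx : x ∈ interior M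
  · exact hf M hM x hx hy
  · exact ⟨x, ⟨subset_closure hxM, hx⟩, rfl⟩

theorem AttainsFrontierValuesOnFrontier.comp [T2Space Y] {g : Y → Z} {f : X → Y}
    (hg : AttainsFrontierValuesOnFrontier g) (hf : AttainsFrontierValuesOnFrontier f)
    (hfc : Continuous f) : AttainsFrontierValuesOnFrontier (g ∘ f) := by
  intro M hM x hx hgfx
  have hfM : IsCompact (f '' M) := hM.image hfc
  have hfxM : f x ∈ f '' M := mem_image_of_mem f (interior_subset hx)
  rw [image_comp] at hgfx
  by_cases hfx : f x ∈ interior (f '' M)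
  · obtain ⟨y, hy, hgy⟩ := hg _ hfM _ hfx hgfx
    obtain ⟨x', hx', rfl⟩ := hf.exists_mem_frontier_eq hM hy (hfM.isClosed.frontier_subset hy)
    exact ⟨x', hx', hgy⟩
  · obtain ⟨x', hx', hfx'⟩ := hf.exists_mem_frontier_eq hM ⟨subset_closure hfxM, hfx⟩ hfxM
    exact ⟨x', hx', congrArg g hfx'⟩

end FrontierValues

theorem univ_pi_cthickening_subset {ι : Type*} [Fintype ι] {X : ι → Type*}
    [∀ i, PseudoMetricSpace (X i)] {s : ∀ i, Set (X i)} (hs : ∀ i, IsCompact (s i)) {δ : ℝ}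
    (hδ : 0 ≤ δ) : univ.pi (fun i => cthickening δ (s i)) ⊆ cthickening δ (univ.pi s) := by
  intro v hv
  have hball : ∀ i, ∃ c ∈ s i, v i ∈ closedBall c δ := fun i => by
    simpa only [(hs i).cthickening_eq_biUnion_closedBall hδ, mem_iUnion₂, exists_prop]
      using hv i (mem_univ i)
  choose c hcs hvc using hball
  refine closedBall_subset_cthickening (show c ∈ univ.pi s from fun i _ => hcs i) δ ?_
  rw [closedBall_pi c hδ]
  exact fun i _ => hvc i

/-- The fibre is an interval `[a, b]`, and `σ (a - δ) < σ t < σ (b + δ)`, so by the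
intermediate value theorem `σ '' [a - δ, b + δ]` contains a neighbourhood of `σ t`. -/
theorem Monotone.image_cthickening_fiber_mem_nhds {σ : ℝ → ℝ} (hm : Monotone σ)
    (hc : Continuous σ) {t δ : ℝ} (hI : IsCompact (σ ⁻¹' {σ t})) (hδ : 0 < δ) :
    σ '' cthickening δ (σ ⁻¹' {σ t}) ∈ 𝓝 (σ t) := by
  set I := σ ⁻¹' {σ t}
  have hIne : I.Nonempty := ⟨t, rfl⟩
  have haI : sInf I ∈ I := hI.sInf_mem hIne
  have hbI : sSup I ∈ I := hI.sSup_mem hIne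
  have hat : sInf I ≤ t := csInf_le hI.bddBelow rfl
  have htb : t ≤ sSup I := le_csSup hI.bddAbove rfl
  have hlt : σ (sInf I - δ) < σ t := by
    refine ((hm (by linarith)).trans_eq (show σ (sInf I) = σ t from haI)).lt_of_ne fun h => ?_
    linarith [csInf_le hI.bddBelow (show sInf I - δ ∈ I from h)]
  have hgt : σ t < σ (sSup I + δ) := by
    refine ((show σ t = σ (sSup I) from hbI.symm).trans_le (hm (by linarith))).lt_of_ne'
      fun h => ?_
    linarith [le_csSup hI.bddAbove (show sSup I + δ ∈ I from h)]
  have hbox : Icc (sInf I - δ) (sSup I + δ) ⊆ cthickening δ I := by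
    intro s hs
    rcases le_total s (sInf I) with hsa | has
    · refine closedBall_subset_cthickening haI δ ?_
      rw [Real.closedBall_eq_Icc]
      exact ⟨hs.1, by linarith⟩
    rcases le_total (sSup I) s with hbs | hsb
    · refine closedBall_subset_cthickening hbI δ ?_
      rw [Real.closedBall_eq_Icc]
      exact ⟨by linarith, hs.2⟩
    · exact self_subset_cthickening I
        ((ordConnected_singleton.preimage_mono hm).out haI hbI ⟨has, hsb⟩)
  exact Filter.mem_of_superset (Icc_mem_nhds hlt hgt)
    ((intermediate_value_Icc (by linarith) hc.continuousOn).trans (image_mono hbox))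

theorem attainsFrontierValuesOnFrontier_piMap_of_monotone {ι : Type*} [Fintype ι] {σ : ℝ → ℝ}
    (hc : Continuous σ) (hm : Monotone σ) :
    AttainsFrontierValuesOnFrontier (Pi.map fun _ : ι => σ) := by
  intro M hM x hx hSx
  set C : Set (ι → ℝ) := univ.pi fun i => σ ⁻¹' {σ (x i)}
  have hxC : x ∈ C := fun i _ => rfl
  by_contra! hfr
  have hCint : C ⊆ interior M := by
    refine (isPreconnected_univ_pi fun i =>
      (ordConnected_singleton.preimage_mono hm).isPreconnected).subset_of_closure_inter_subset
      isOpen_interior ⟨x, hxC, hx⟩ ?_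
    rintro c ⟨hcl, hcC⟩
    by_contra hci
    exact hfr c ⟨closure_mono interior_subset hcl, hci⟩ (funext fun i => hcC i (mem_univ i))
  have hC : IsCompact C := hM.of_isClosed_subset
    (isClosed_set_pi fun i _ => isClosed_singleton.preimage hc) (hCint.trans interior_subset)
  have hfib : ∀ i, IsCompact (σ ⁻¹' {σ (x i)}) := fun i => by
    rw [← eval_image_univ_pi (i := i) ⟨x, hxC⟩]
    exact hC.image (continuous_apply i)
  obtain ⟨δ, hδ, hδM⟩ := hC.exists_cthickening_subset_open isOpen_interior hCint
  have hnhds : (univ.pi fun i => σ '' cthickening δ (σ ⁻¹' {σ (x i)})) ∈ 𝓝 (Pi.map _ x) :=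
    set_pi_mem_nhds finite_univ fun i _ => hm.image_cthickening_fiber_mem_nhds hc (hfib i) hδ
  rw [← piMap_image_univ_pi] at hnhds
  refine hSx.2 (mem_interior_iff_mem_nhds.2 (Filter.mem_of_superset hnhds (image_mono ?_)))
  exact (univ_pi_cthickening_subset hfib hδ.le).trans (hδM.trans interior_subset)

theorem attainsFrontierValuesOnFrontier_piMap {ι : Type*} [Fintype ι] {σ : ℝ → ℝ}
    (hc : Continuous σ) (hσ : Monotone σ ∨ Antitone σ) :
    AttainsFrontierValuesOnFrontier (Pi.map fun _ : ι => σ) := by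
  rcases hσ with hm | ha
  · exact attainsFrontierValuesOnFrontier_piMap_of_monotone hc hm
  · have hneg := attainsFrontierValuesOnFrontier_piMap_of_monotone (ι := ι) hc.neg ha.neg
    have := (Homeomorph.neg (ι → ℝ)).isHomeomorph.attainsFrontierValuesOnFrontier.comp hneg
      (Continuous.piMap fun _ => hc.neg)
    convert this using 1
    ext v i
    simp

theorem isHomeomorph_mulVec_add {n : Type*} [Fintype n] [DecidableEq n] {W : Matrix n n ℝ}
    (hW : IsUnit W) (v : n → ℝ) : IsHomeomorph fun x => W *ᵥ x + v :=
  have := hW.invertible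
  (Homeomorph.addRight v).isHomeomorph.comp
    (W.toLinearEquiv' this).toContinuousLinearEquiv.toHomeomorph.isHomeomorph

theorem IsInvNetChain.attainsFrontierValuesOnFrontier {n : ℕ} {σ : ℝ → ℝ} (hc : Continuous σ)
    (hσ : Monotone σ ∨ Antitone σ) {F : (Fin n → ℝ) → (Fin n → ℝ)} (hF : IsInvNetChain σ n F) :
    AttainsFrontierValuesOnFrontier F := by
  induction hF with
  | last W v hW => exact (isHomeomorph_mulVec_add hW v).attainsFrontierValuesOnFrontier
  | hidden W v hW _ ih =>
    have hW' := isHomeomorph_mulVec_add hW v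
    have hlayer := (attainsFrontierValuesOnFrontier_piMap hc hσ).comp
      hW'.attainsFrontierValuesOnFrontier hW'.continuous
    exact ih.comp hlayer ((Continuous.piMap fun _ => hc).comp hW'.continuous)

/-- Let `F ∈ NN_σ^{n₀}(n₀)` have square, full-rank weight matrices and a
continuous monotone activation `σ`. If an interior point `x` of the compact set `M` is
mapped to a boundary point of `F(M)`, then some boundary point `x̃` of `M` has the same
image `F x̃ = F x`. -/
theorem boundary_image_of_interior_point
    (n₀ : ℕ) (M : Set (Fin n₀ → ℝ)) (hM : IsCompact M)
    (σ : ℝ → ℝ) (hσc : Continuous σ) (hσm : Monotone σ ∨ Antitone σ)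
    (F : (Fin n₀ → ℝ) → (Fin n₀ → ℝ)) (hF : IsInvNetChain σ n₀ F)
    (x : Fin n₀ → ℝ) (hx : x ∈ interior M) (hFx : F x ∈ frontier (F '' M)) :
    ∃ x' ∈ frontier M, F x' = F x :=
  hF.attainsFrontierValuesOnFrontier hσc hσm M hM x hx hFx
end
end

section
/- Let K₁, K₂ ⊂ ℝ^{n₀} be disjoint compact sets such that for some c ∈ ℝ^{n₀} and linearly independent vectors v_1, …, v_{n₀} ∈ ℝ^{n₀}, K₁ is contained in the open sector S := {x ∈ ℝ^{n₀} : x = c + Σ_{j=1}^{n₀} λ_j v_j, λ_j > 0 for all j} and K₂ ⊂ ℝ^{n₀} ∖ closure(S). Then there exist an invertible matrix W₁ ∈ ℝ^{n₀×n₀}, a vector b₁ ∈ ℝ^{n₀} and q > 0 such that the one-layer map F₁(x) := ReLU(W₁ x + b₁) satisfies F₁(x) = 0 for all x ∈ K₁, while for every x ∈ K₂ the vector F₁(x) has all components nonnegative and Σ_{j=1}^{n₀} (F₁(x))^{(j)} > q; in particular F₁(K₁) and F₁(K₂) are strictly separated by the linear hyperplane {y ∈ ℝ^{n₀} : Σ_j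 y^{(j)} = q}. -/
/-!
Write `x - c` in the basis `v`: `x` lies in the sector `S` exactly when all coordinates of
`x - c` are positive, and in its closure as soon as they are all nonnegative. The layer
`x ↦ ReLU (-(coordinates of x - c))` therefore vanishes on `K₁`, while at every point of `K₂`
some coordinate is negative, so the sum of the outputs is a continuous function that is
positive on `K₂`; compactness of `K₂` bounds it from below by some `q > 0`.
-/

noncomputable section

/-- The rectified linear unit. -/
def ReLU (t : ℝ) : ℝ := max t 0

open Set Module

theorem ReLU_nonneg (t : ℝ) : 0 ≤ ReLU t := le_max_right t 0

theorem ReLU_eq_zero {t : ℝ} : ReLU t = 0 ↔ t ≤ 0 := max_eq_right_iff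

theorem ReLU_pos {t : ℝ} : 0 < ReLU t ↔ 0 < t := by
  simp [ReLU]

theorem continuous_ReLU : Continuous ReLU := continuous_id.max continuous_const

theorem IsCompact.exists_pos_lt_sum_ReLU {X ι : Type*} [TopologicalSpace X] [Fintype ι]
    {K : Set X} (hK : IsCompact K) {f : X → ι → ℝ} (hf : Continuous f)
    (hpos : ∀ x ∈ K, ∃ i, 0 < f x i) : ∃ q, 0 < q ∧ ∀ x ∈ K, q < ∑ i, ReLU (f x i) := by
  have hcont : Continuous fun x => ∑ i, ReLU (f x i) :=
    continuous_finsetSum _ fun i _ => continuous_ReLU.comp ((continuous_apply i).comp hf)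
  obtain ⟨a, ha, hle⟩ := hK.exists_forall_le' hcont.continuousOn (a := 0) fun x hx => by
    obtain ⟨i, hi⟩ := hpos x hx
    exact Finset.sum_pos' (fun i _ => ReLU_nonneg _) ⟨i, Finset.mem_univ i, ReLU_pos.2 hi⟩
  exact ⟨a / 2, half_pos ha, fun x hx => (half_lt_self ha).trans_le (hle x hx)⟩

def openSector {ι E : Type*} [Fintype ι] [AddCommGroup E] [Module ℝ E] (c : E) (v : ι → E) :
    Set E :=
  {x | ∃ lam : ι → ℝ, (∀ j, 0 < lam j) ∧ x = c + ∑ j, lam j • v j}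

section Sector

variable {ι E : Type*} [Fintype ι] [AddCommGroup E] [Module ℝ E]

theorem openSector_eq_image (c : E) (v : ι → E) :
    openSector c v = (fun lam : ι → ℝ => c + ∑ j, lam j • v j) '' univ.pi fun _ => Ioi 0 := by
  ext x
  simp [openSector, eq_comm]

theorem add_sum_smul_mem_closure_openSector [TopologicalSpace E] [ContinuousAdd E]
    [ContinuousSMul ℝ E] (c : E) (v : ι → E) {lam : ι → ℝ} (hlam : ∀ j, 0 ≤ lam j) :
    c + ∑ j, lam j • v j ∈ closure (openSector c v) := by
  rw [openSector_eq_image]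
  refine image_closure_subset_closure_image (by fun_prop) ⟨lam, ?_, rfl⟩
  simpa [closure_pi_set, Pi.le_def] using hlam

theorem Module.Basis.repr_sub_pos_of_mem_openSector (b : Basis ι ℝ E) {c x : E}
    (hx : x ∈ openSector c b) (j : ι) : 0 < b.repr (x - c) j := by
  obtain ⟨lam, hlam, rfl⟩ := hx
  rw [add_sub_cancel_left, b.repr_sum_self]
  exact hlam j

theorem Module.Basis.mem_closure_openSector_of_repr_sub_nonneg [TopologicalSpace E]
    [ContinuousAdd E] [ContinuousSMul ℝ E] (b : Basis ι ℝ E) {c x : E}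
    (hx : ∀ j, 0 ≤ b.repr (x - c) j) : x ∈ closure (openSector c b) := by
  simpa only [b.sum_repr, add_sub_cancel] using add_sum_smul_mem_closure_openSector c b hx

end Sector

theorem Module.Basis.exists_isUnit_mulVec_add_eq_neg_repr_sub {ι : Type*} [Fintype ι]
    [DecidableEq ι] (b : Basis ι ℝ (ι → ℝ)) (c : ι → ℝ) :
    ∃ (W : Matrix ι ι ℝ) (d : ι → ℝ), IsUnit W ∧ ∀ x i, W.mulVec x i + d i = -b.repr (x - c) i := by
  set A := LinearMap.toMatrix' (b.equivFun : (ι → ℝ) →ₗ[ℝ] (ι → ℝ))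
  have hA : IsUnit A := (Matrix.isUnit_iff_isUnit_det _).2 <| by
    rw [LinearMap.det_toMatrix']
    exact LinearEquiv.isUnit_det' _
  refine ⟨-A, A.mulVec c, hA.neg, fun x i => ?_⟩
  simp only [A, Matrix.neg_mulVec, LinearMap.toMatrix'_mulVec, LinearEquiv.coe_coe,
    b.equivFun_apply, map_sub, Finsupp.coe_sub, Pi.neg_apply, Pi.sub_apply]
  ring

theorem first_layer_separates_sector_general
    (n₀ : ℕ) (K₁ K₂ : Set (Fin n₀ → ℝ))
    (hK₂ : IsCompact K₂)
    (c : Fin n₀ → ℝ) (v : Fin n₀ → (Fin n₀ → ℝ)) (hv : LinearIndependent ℝ v)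
    (S : Set (Fin n₀ → ℝ))
    (hS : S = {x | ∃ lam : Fin n₀ → ℝ, (∀ j, 0 < lam j) ∧ x = c + ∑ j, lam j • v j})
    (hK₁S : K₁ ⊆ S) (hK₂S : K₂ ⊆ (closure S)ᶜ) :
    ∃ (W₁ : Matrix (Fin n₀) (Fin n₀) ℝ) (b₁ : Fin n₀ → ℝ) (q : ℝ),
      IsUnit W₁ ∧ 0 < q ∧
      (∀ x ∈ K₁, ∀ i, ReLU (W₁.mulVec x i + b₁ i) = 0) ∧
      (∀ x ∈ K₂, (∀ i, 0 ≤ ReLU (W₁.mulVec x i + b₁ i)) ∧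
        q < ∑ i, ReLU (W₁.mulVec x i + b₁ i)) := by
  set b := Basis.mk hv (hv.span_eq_top_of_card_eq_finrank' (by simp)).ge
  have hS' : S = openSector c b := by rw [hS, Basis.coe_mk]; rfl
  obtain ⟨W, d, hW, hWd⟩ := b.exists_isUnit_mulVec_add_eq_neg_repr_sub c
  have hK₂pos : ∀ x ∈ K₂, ∃ i, 0 < W.mulVec x i + d i := by
    intro x hx
    by_contra! h
    refine hK₂S hx (hS' ▸ b.mem_closure_openSector_of_repr_sub_nonneg fun j => ?_)
    linarith [h j, hWd x j]
  obtain ⟨q, hq, hlt⟩ := hK₂.exists_pos_lt_sum_ReLU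
    ((continuous_const.matrix_mulVec continuous_id).add continuous_const) hK₂pos
  refine ⟨W, d, q, hW, hq, fun x hx i => ReLU_eq_zero.2 ?_,
    fun x hx => ⟨fun i => ReLU_nonneg _, hlt x hx⟩⟩
  linarith [hWd x i, b.repr_sub_pos_of_mem_openSector (hS' ▸ hK₁S hx) i]

/-- If `K₁` lies in an open sector `S` with apex `c` spanned by
linearly independent directions `v₁,…,v_{n₀}` and the compact set `K₂` avoids the
closure of `S`, then there are an invertible `W₁`, a bias `b₁` and `q > 0` such that the
layer `F₁ x = ReLU (W₁ x + b₁)` maps `K₁` to `0` while every `F₁ x`, `x ∈ K₂`, has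
nonnegative components summing to more than `q`; in particular `F₁(K₁)` and `F₁(K₂)` are
strictly separated by the hyperplane `{y : ∑ j, y j = q}`. -/
theorem first_layer_separates_sector
    (n₀ : ℕ) (K₁ K₂ : Set (Fin n₀ → ℝ))
    (hK₁ : IsCompact K₁) (hK₂ : IsCompact K₂) (hdisj : Disjoint K₁ K₂)
    (c : Fin n₀ → ℝ) (v : Fin n₀ → (Fin n₀ → ℝ)) (hv : LinearIndependent ℝ v)
    (S : Set (Fin n₀ → ℝ))
    (hS : S = {x | ∃ lam : Fin n₀ → ℝ, (∀ j, 0 < lam j) ∧ x = c + ∑ j, lam j • v j})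
    (hK₁S : K₁ ⊆ S) (hK₂S : K₂ ⊆ (closure S)ᶜ) :
    ∃ (W₁ : Matrix (Fin n₀) (Fin n₀) ℝ) (b₁ : Fin n₀ → ℝ) (q : ℝ),
      IsUnit W₁ ∧ 0 < q ∧
      (∀ x ∈ K₁, ∀ i, ReLU (W₁.mulVec x i + b₁ i) = 0) ∧
      (∀ x ∈ K₂, (∀ i, 0 ≤ ReLU (W₁.mulVec x i + b₁ i)) ∧
        q < ∑ i, ReLU (W₁.mulVec x i + b₁ i)) :=
  first_layer_separates_sector_general n₀ K₁ K₂ hK₂ c v hv S hS hK₁S hK₂S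
end
end
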